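/- Let N be an even integer with N ≥ 4 and 4 ∤ N. Then the least positive integer n such that the constant n-tuple (N/2 mod N, …, N/2 mod N) of elements of ℤ/Nℤ satisfies M_n(N/2, …, N/2) = Id or M_n(N/2, …, N/2) = −Id is n = 6; moreover the 6-tuple (N/2, N/2, N/2, N/2, N/2, N/2) is an irreducible solution of (E_N). -/

import Mathlib

open Matrix

/-- `Mmat [a₁, …, aₙ]` is the product `[[aₙ,-1],[1,0]] ⋯ [[a₁,-1],[1,0]]`. -/
def Mmat {R : Type*} [CommRing R] : List R → Matrix (Fin 2) (Fin 2) R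
  | [] => 1
  | a :: t => Mmat t * !![a, -1; 1, 0]

/-- A tuple is a solution of (E_N) if its matrix is `Id` or `-Id`. -/
def IsSolution {R : Type*} [CommRing R] (l : List R) : Prop :=
  Mmat l = 1 ∨ Mmat l = -1

/-- The sum `(a₁,…,aₙ) ⊕ (b₁,…,bₘ) = (a₁+bₘ, a₂,…,aₙ₋₁, aₙ+b₁, b₂,…,bₘ₋₁)`. -/
def oplus {R : Type*} [CommRing R] (a b : List R) : List R :=
  List.ofFn (fun i : Fin (a.length + b.length - 2) =>
    if (i : ℕ) = 0 then a.getD 0 0 + b.getD (b.length - 1) 0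
    else if (i : ℕ) < a.length - 1 then a.getD (i : ℕ) 0
    else if (i : ℕ) = a.length - 1 then a.getD (a.length - 1) 0 + b.getD 0 0
    else b.getD ((i : ℕ) - a.length + 1) 0)

/-- Two tuples are equivalent if one is a cyclic permutation of the other or of
its reversal. -/
def TupleEquiv {R : Type*} (a b : List R) : Prop :=
  (∃ k, b = a.rotate k) ∨ (∃ k, b = a.reverse.rotate k)

/-- A solution `c` (of size ≥ 3) is reducible if `c ∼ a ⊕ b` with `b` a solution,
`a` of size ≥ 3 and `b` of size ≥ 3. -/
def Reducible {R : Type*} [CommRing R] (c : List R) : Prop :=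
  ∃ a b : List R, 3 ≤ a.length ∧ 3 ≤ b.length ∧ IsSolution b ∧
    TupleEquiv c (oplus a b)

/-- The alternating tuple `(k, -k, k, -k, …)` of length `n`. -/
def altList {R : Type*} [CommRing R] (n : ℕ) (k : R) : List R :=
  List.ofFn (fun i : Fin n => if (i : ℕ) % 2 = 0 then k else -k)

/-- Continuants: `K₋₁ = 0`, `K₀ = 1`,
`Kₙ(x₁,…,xₙ) = x₁·Kₙ₋₁(x₂,…,xₙ) - Kₙ₋₂(x₃,…,xₙ)`. -/
def contK {R : Type*} [CommRing R] : List R → R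
  | [] => 1
  | [x] => x
  | x :: y :: t => x * contK (y :: t) - contK t


/-! The element `a = N/2` of `ℤ/Nℤ` satisfies `a + a = 0` and, since `N/2` is odd, `a² = a`;
the argument works for any such `a ≠ 0, 1` in a commutative ring. With `A = [[a,-1],[1,0]]`
these identities give `A³ = [[a, 1-a], [a-1, a]]` and `A⁶ = -1`, while the `(1,0)` entries
`1, a, a-1, a, 1` of `A, …, A⁵` do not vanish. If `(a,…,a) ∼ c ⊕ b` with `b` a solution, then
`b = (x, a, …, a, w)` with `k ∈ {1, 2, 3}` inner entries, and the `(1,1)` entry of `M(b)` is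
`-(Aᵏ)₀₀`, whose square `a`, `1 + a` or `a` is not `1`. -/

section Mmat
variable {R : Type*} [CommRing R]

theorem Mmat_append (l₁ l₂ : List R) : Mmat (l₁ ++ l₂) = Mmat l₂ * Mmat l₁ := by
  induction l₁ with
  | nil => simp [Mmat]
  | cons a t ih => simp only [List.cons_append, Mmat, ih, mul_assoc]

theorem Mmat_replicate (n : ℕ) (a : R) : Mmat (List.replicate n a) = !![a, -1; 1, 0] ^ n := by
  induction n with
  | zero => rfl
  | succ n ih => rw [List.replicate_succ, Mmat, ih, pow_succ]

theorem Mmat_cons_append_singleton_apply_one_one (x w : R) (l : List R) :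
    Mmat (x :: (l ++ [w])) 1 1 = -Mmat l 0 0 := by
  simp [Mmat, Mmat_append, Matrix.mul_apply, Matrix.vecMul, dotProduct, Fin.sum_univ_two]

theorem Mmat_apply_one_one_eq_neg_tail_dropLast {l : List R} (hl : 2 ≤ l.length) :
    Mmat l 1 1 = -Mmat l.tail.dropLast 0 0 := by
  obtain ⟨x, t, rfl⟩ := List.exists_cons_of_length_pos (by omega : 0 < l.length)
  have ht : t ≠ [] := by rintro rfl; simp at hl
  conv_lhs => rw [← List.dropLast_append_getLast ht]
  exact Mmat_cons_append_singleton_apply_one_one _ _ _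

theorem IsSolution.Mmat_apply_one_zero {l : List R} (h : IsSolution l) : Mmat l 1 0 = 0 := by
  rcases h with h | h <;> simp [h]

theorem IsSolution.Mmat_apply_one_one_sq {l : List R} (h : IsSolution l) : Mmat l 1 1 ^ 2 = 1 := by
  rcases h with h | h <;> simp [h]

end Mmat

theorem TupleEquiv.eq_replicate {R : Type*} {n : ℕ} {c : R} {l : List R}
    (h : TupleEquiv (List.replicate n c) l) : l = List.replicate n c := by
  rcases h with ⟨k, rfl⟩ | ⟨k, rfl⟩ <;> simp [List.rotate_replicate]

theorem drop_length_oplus {R : Type*} [CommRing R] {a b : List R} (ha : 1 ≤ a.length) :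
    (oplus a b).drop a.length = b.tail.dropLast := by
  apply List.ext_getElem
  · simp only [oplus, List.length_drop, List.length_ofFn, List.length_dropLast, List.length_tail]
    omega
  · intro i h₁ h₂
    simp only [List.length_tail, List.length_dropLast] at h₂
    have ha' : a ≠ [] := List.ne_nil_of_length_pos ha
    simp [oplus, ha', show ¬ a.length + i < a.length - 1 by omega,
      show a.length + i ≠ a.length - 1 by omega, show i + 1 < b.length by omega]

section Idempotent
variable {R : Type*} [CommRing R] {a : R}

theorem matrix_pow_two_of_idem (h2 : a + a = 0) (ha : IsIdempotentElem a) :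
    !![a, -1; 1, 0] ^ 2 = !![a - 1, a; a, -1] := by
  rw [sq, Matrix.mul_fin_two]
  simp only [EmbeddingLike.apply_eq_iff_eq, Matrix.vecCons_inj, and_true]
  exact ⟨⟨by linear_combination ha.eq, by linear_combination -h2⟩, by ring, by ring⟩

theorem matrix_pow_three_of_idem (h2 : a + a = 0) (ha : IsIdempotentElem a) :
    !![a, -1; 1, 0] ^ 3 = !![a, 1 - a; a - 1, a] := by
  rw [pow_succ, matrix_pow_two_of_idem h2 ha, Matrix.mul_fin_two]
  simp only [EmbeddingLike.apply_eq_iff_eq, Matrix.vecCons_inj, and_true]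
  exact ⟨⟨by linear_combination ha.eq, by ring⟩, by linear_combination ha.eq,
    by linear_combination -h2⟩

theorem matrix_pow_six_of_idem (h2 : a + a = 0) (ha : IsIdempotentElem a) :
    !![a, -1; 1, 0] ^ 6 = -1 := by
  rw [show 6 = 3 * 2 from rfl, pow_mul, matrix_pow_three_of_idem h2 ha, sq, Matrix.mul_fin_two,
    Matrix.one_fin_two]
  simp only [Matrix.neg_of, Matrix.neg_cons, Matrix.neg_empty, EmbeddingLike.apply_eq_iff_eq,
    Matrix.vecCons_inj, and_true]
  exact ⟨⟨by linear_combination h2, by linear_combination -2 * ha.eq⟩,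
    by linear_combination 2 * ha.eq, by linear_combination h2⟩

theorem matrix_pow_apply_one_zero_ne_zero (h2 : a + a = 0) (ha : IsIdempotentElem a) (ha0 : a ≠ 0)
    (ha1 : a ≠ 1) {n : ℕ} (hn : 0 < n) (hn6 : n < 6) : (!![a, -1; 1, 0] ^ n) 1 0 ≠ 0 := by
  have : Nontrivial R := ⟨⟨a, 0, ha0⟩⟩
  interval_cases n
  · simp
  · simpa [matrix_pow_two_of_idem h2 ha] using ha0
  · simpa [matrix_pow_three_of_idem h2 ha, sub_eq_zero] using ha1
  · rw [pow_succ, matrix_pow_three_of_idem h2 ha, Matrix.mul_fin_two]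
    simp only [Matrix.of_apply, Matrix.cons_val', Matrix.cons_val_zero, Matrix.cons_val_one,
      Matrix.cons_val_fin_one]
    convert ha0 using 2
    linear_combination ha.eq
  · rw [show 5 = 3 + 2 from rfl, pow_add, matrix_pow_three_of_idem h2 ha,
      matrix_pow_two_of_idem h2 ha, Matrix.mul_fin_two]
    simp only [Matrix.of_apply, Matrix.cons_val', Matrix.cons_val_zero, Matrix.cons_val_one,
      Matrix.cons_val_fin_one]
    convert one_ne_zero (α := R) using 2
    linear_combination 2 * ha.eq

theorem matrix_pow_apply_zero_zero_sq_ne_one (h2 : a + a = 0) (ha : IsIdempotentElem a)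
    (ha0 : a ≠ 0) (ha1 : a ≠ 1) {k : ℕ} (hk : 0 < k) (hk4 : k < 4) :
    (!![a, -1; 1, 0] ^ k) 0 0 ^ 2 ≠ 1 := by
  interval_cases k
  · simpa [sq, ha.eq] using ha1
  · intro h
    apply ha0
    rw [matrix_pow_two_of_idem h2 ha] at h
    simp only [Matrix.of_apply, Matrix.cons_val', Matrix.cons_val_zero,
      Matrix.cons_val_fin_one] at h
    linear_combination h - ha.eq + h2
  · simpa [matrix_pow_three_of_idem h2 ha, sq, ha.eq] using ha1

theorem isLeast_isSolution_replicate (h2 : a + a = 0) (ha : IsIdempotentElem a) (ha0 : a ≠ 0)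
    (ha1 : a ≠ 1) : IsLeast {n : ℕ | 0 < n ∧ IsSolution (List.replicate n a)} 6 := by
  refine ⟨⟨by norm_num, Or.inr ?_⟩, fun n ⟨hn, hsol⟩ => ?_⟩
  · rw [Mmat_replicate, matrix_pow_six_of_idem h2 ha]
  · by_contra! hn6
    have h10 := hsol.Mmat_apply_one_zero
    rw [Mmat_replicate] at h10
    exact matrix_pow_apply_one_zero_ne_zero h2 ha ha0 ha1 hn hn6 h10

theorem not_reducible_replicate_six (h2 : a + a = 0) (ha : IsIdempotentElem a) (ha0 : a ≠ 0)
    (ha1 : a ≠ 1) : ¬ Reducible (List.replicate 6 a) := by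
  rintro ⟨l, b, hl, hb, hsol, hequiv⟩
  have hsum := hequiv.eq_replicate
  have hlen : l.length + b.length = 8 := by
    have := congrArg List.length hsum
    simp only [oplus, List.length_ofFn, List.length_replicate] at this
    omega
  have hmid : b.tail.dropLast = List.replicate (b.length - 2) a := by
    rw [← drop_length_oplus (a := l) (b := b) (by omega), hsum, List.drop_replicate]
    congr 1
    omega
  have h11 := hsol.Mmat_apply_one_one_sq
  rw [Mmat_apply_one_one_eq_neg_tail_dropLast (by omega), hmid, Mmat_replicate, neg_sq] at h11
  exact matrix_pow_apply_zero_zero_sq_ne_one h2 ha ha0 ha1 (by omega) (by omega) h11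

end Idempotent

section Half
variable {m : ℕ}

theorem half_add_half_eq_zero : ((m : ℕ) : ZMod (2 * m)) + m = 0 := by
  rw [← two_mul]
  exact_mod_cast ZMod.natCast_self (2 * m)

theorem isIdempotentElem_half (hm : Odd m) : IsIdempotentElem ((m : ℕ) : ZMod (2 * m)) := by
  obtain ⟨t, rfl⟩ := hm
  have h := half_add_half_eq_zero (m := 2 * t + 1)
  rw [IsIdempotentElem]
  push_cast at h ⊢
  linear_combination (t : ZMod (2 * (2 * t + 1))) * h

theorem half_ne_zero (hm : 0 < m) : ((m : ℕ) : ZMod (2 * m)) ≠ 0 := by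
  intro h
  have := congrArg ZMod.val h
  rw [ZMod.val_natCast_of_lt (by omega), ZMod.val_zero] at this
  omega

theorem half_ne_one (hm : 1 < m) : ((m : ℕ) : ZMod (2 * m)) ≠ 1 := by
  have : Fact (1 < 2 * m) := ⟨by omega⟩
  intro h
  have := congrArg ZMod.val h
  rw [ZMod.val_natCast_of_lt (by omega), ZMod.val_one] at this
  omega

end Half

theorem monomial_half_N_four_not_dvd (N : ℕ) (hN : 4 ≤ N) (hNeven : 2 ∣ N) (h4 : ¬ 4 ∣ N) :
    IsLeast {n : ℕ | 0 < n ∧ IsSolution (List.replicate n ((N / 2 : ℕ) : ZMod N))} 6 ∧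
    IsSolution (List.replicate 6 ((N / 2 : ℕ) : ZMod N)) ∧
    ¬ Reducible (List.replicate 6 ((N / 2 : ℕ) : ZMod N)) := by
  obtain ⟨m, rfl⟩ := hNeven
  rw [Nat.mul_div_cancel_left m two_pos]
  have hm : Odd m := Nat.odd_iff.mpr (by omega)
  have h2 := half_add_half_eq_zero (m := m)
  have ha := isIdempotentElem_half hm
  have ha0 := half_ne_zero (m := m) (by omega)
  have ha1 := half_ne_one (m := m) (by omega)
  have hleast := isLeast_isSolution_replicate h2 ha ha0 ha1
  exact ⟨hleast, hleast.1.2, not_reducible_replicate_six h2 ha ha0 ha1⟩
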